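/- Let X ⊆ Y be an inclusion of simplicial sets, let y be a vertex of X which is narrow in Y, and let k ≥ 1. Let N_k be the set of nondegenerate k-simplices of Y which have y as a vertex and do not belong to X, and for σ ∈ N_k let i_σ (0 ≤ i_σ ≤ k) be the unique index such that the i_σ-th vertex of σ is y. Then the inclusion Y ∪ W_y(X) ∪ W_y(sk_{k−1} Y) ↪ Y ∪ W_y(X) ∪ W_y(sk_k Y) (subcomplexes of J × Y, with Y identified with {0} × Y) is a pushout of the coproduct over σ ∈ N_k of the iso-horn inclusions 𝕍_{i_σ}[k+1] ↪ ∇̄_{i_σ}[k+1]. -/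

import Mathlib

open CategoryTheory Simplicial Opposite Limits

namespace Paper

/-! ## The simplicial set `J`, nerve of the free-living isomorphism -/

/-- The simplicial set `J`, the nerve of the free-living isomorphism `𝕀`:
its `n`-simplices are the tuples `{0,1}^(n+1)` (recorded as `Bool`-valued functions,
`false` being the vertex `0` and `true` the vertex `1`), with all simplicial
operators acting by reindexing. -/
def J : SSet.{0} where
  obj m := Fin (m.unop.len + 1) → Bool
  map f := TypeCat.ofHom fun a => a ∘ f.unop.toOrderHom
  map_id _ := rfl
  map_comp _ _ := rfl

/-- The two vertices `0, 1 : Δ[0] ⟶ J` of `J`; `ptJ false` is the vertex `0` and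
`ptJ true` is the vertex `1`. -/
def ptJ (b : Bool) : Δ[0] ⟶ J where
  app _ := TypeCat.ofHom fun _ => fun _ => b
  naturality _ _ _ := rfl

/-- The boundary `∂J = {0} ∪ {1}` of `J` (two discrete points). -/
def bJ : SSet.{0} where
  obj _ := Bool
  map _ := TypeCat.ofHom fun b => b
  map_id _ := rfl
  map_comp _ _ := rfl

/-- The inclusion `∂J ↪ J`. -/
def bJIncl : bJ ⟶ J where
  app _ := TypeCat.ofHom fun b => fun _ => b
  naturality _ _ _ := rfl

/-! ## Binary products and pushout-products -/

/-- The (pointwise) product of two simplicial sets. -/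
def sprod (X Y : SSet.{0}) : SSet.{0} where
  obj m := X.obj m × Y.obj m
  map f := TypeCat.ofHom fun p => (X.map f p.1, Y.map f p.2)
  map_id m := by
    ext p : 3
    exact Prod.ext (FunctorToTypes.map_id_apply X p.1) (FunctorToTypes.map_id_apply Y p.2)
  map_comp f g := by
    ext p : 3
    exact Prod.ext (FunctorToTypes.map_comp_apply X f g p.1)
      (FunctorToTypes.map_comp_apply Y f g p.2)

/-- The product of two morphisms of simplicial sets. -/
def sprodMap {X X' Y Y' : SSet.{0}} (f : X ⟶ X') (g : Y ⟶ Y') : sprod X Y ⟶ sprod X' Y' where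
  app m := TypeCat.ofHom fun p => (f.app m p.1, g.app m p.2)
  naturality m m' φ := by
    ext p : 3
    have h1 := ConcreteCategory.congr_hom (f.naturality φ) p.1
    have h2 := ConcreteCategory.congr_hom (g.naturality φ) p.2
    exact Prod.ext h1 h2

/-- The pushout-product `f □ g : (A × Z) ∪ (B × W) ⟶ B × Z` of `f : A ⟶ B` and
`g : W ⟶ Z`, the domain being presented as the pushout `(A × Z) ∪_{A × W} (B × W)`. -/
noncomputable def pp {A B W Z : SSet.{0}} (f : A ⟶ B) (g : W ⟶ Z) :
    pushout (sprodMap (𝟙 A) g) (sprodMap f (𝟙 W)) ⟶ sprod B Z :=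
  pushout.desc (sprodMap f (𝟙 Z)) (sprodMap (𝟙 B) g) rfl

/-! ## Saturated classes of morphisms -/

/-- A class of morphisms is stable under retracts if, whenever `f` is a retract of `g`
in the arrow category, membership of `g` implies membership of `f`. -/
def StableUnderRetracts (T : MorphismProperty SSet.{0}) : Prop :=
  ∀ ⦃X Y X' Y' : SSet.{0}⦄ (f : X ⟶ Y) (g : X' ⟶ Y')
    (i : Arrow.mk f ⟶ Arrow.mk g) (r : Arrow.mk g ⟶ Arrow.mk f),
    i ≫ r = 𝟙 _ → T g → T f

/-- The inclusion functor `Set.Iio i ⥤ ι`. -/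
def iioFunctor {ι : Type} [Preorder ι] (i : ι) : Set.Iio i ⥤ ι :=
  Monotone.functor (f := Subtype.val) (fun _ _ h => h)

/-- The cocone on the restriction of `F : ι ⥤ SSet` to `Set.Iio i` with apex `F.obj i`. -/
def restrictionCocone {ι : Type} [Preorder ι] (F : ι ⥤ SSet.{0}) (i : ι) :
    Cocone (iioFunctor i ⋙ F) where
  pt := F.obj i
  ι :=
    { app := fun j => F.map (homOfLE j.2.le)
      naturality := fun j k h => by
        dsimp [iioFunctor]
        rw [← F.map_comp, Category.comp_id]
        congr 1 }

/-- A class of morphisms is stable under transfinite composition if, for every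
well-ordered type `ι` and every functor `F : ι ⥤ SSet` which is continuous at limit
stages and whose successor maps `F.obj i ⟶ F.obj (i+1)` all belong to the class, and
every colimit cocone `c` on `F`, the transfinite composite `F.obj ⊥ ⟶ c.pt` belongs to
the class. -/
def StableUnderTransfiniteComposition (T : MorphismProperty SSet.{0}) : Prop :=
  ∀ (ι : Type) [LinearOrder ι] [SuccOrder ι] [OrderBot ι] [WellFoundedLT ι]
    (F : ι ⥤ SSet.{0}),
    (∀ i : ι, ¬IsMax i → T (F.map (homOfLE (Order.le_succ i)))) →
    (∀ i : ι, Order.IsSuccLimit i → Nonempty (IsColimit (restrictionCocone F i))) →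
    ∀ (c : Cocone F), IsColimit c → T (c.ι.app ⊥)

/-- A class of morphisms of simplicial sets is saturated if it is closed under
isomorphisms, pushouts, transfinite compositions, and retracts. -/
structure IsSaturated (T : MorphismProperty SSet.{0}) : Prop where
  respectsIso : T.RespectsIso
  stableUnderCobaseChange : T.IsStableUnderCobaseChange
  stableUnderRetracts : StableUnderRetracts T
  stableUnderTransfiniteComposition : StableUnderTransfiniteComposition T

/-- The saturated closure of a class of morphisms: the smallest saturated class
containing it. -/
def satClosure (S : MorphismProperty SSet.{0}) : MorphismProperty SSet.{0} :=
  fun _ _ f => ∀ T : MorphismProperty SSet.{0}, IsSaturated T → S ≤ T → T f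

/-! ## Subcomplexes -/

/-- A subcomplex of a simplicial set. -/
structure Sub (X : SSet.{0}) where
  carrier : ∀ m, Set (X.obj m)
  map_mem : ∀ ⦃m m' : SimplexCategoryᵒᵖ⦄ (f : m ⟶ m') ⦃σ : X.obj m⦄,
    σ ∈ carrier m → X.map f σ ∈ carrier m'

/-- The simplicial set underlying a subcomplex. -/
def Sub.toSSet {X : SSet.{0}} (S : Sub X) : SSet.{0} where
  obj m := S.carrier m
  map f := TypeCat.ofHom fun σ => ⟨X.map f σ.1, S.map_mem f σ.2⟩
  map_id m := by
    ext σ : 3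
    exact Subtype.ext (FunctorToTypes.map_id_apply X σ.1)
  map_comp f g := by
    ext σ : 3
    exact Subtype.ext (FunctorToTypes.map_comp_apply X f g σ.1)

/-- The inclusion of a subcomplex. -/
def Sub.ι {X : SSet.{0}} (S : Sub X) : S.toSSet ⟶ X where
  app _ := TypeCat.ofHom fun σ => σ.1
  naturality _ _ _ := rfl

/-- Containment of subcomplexes. -/
def Sub.Le {X : SSet.{0}} (S T : Sub X) : Prop := ∀ m, S.carrier m ⊆ T.carrier m

/-- The inclusion map associated to a containment of subcomplexes. -/
def Sub.homOfLe {X : SSet.{0}} {S T : Sub X} (h : S.Le T) : S.toSSet ⟶ T.toSSet where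
  app m := TypeCat.ofHom fun σ => ⟨σ.1, h m σ.2⟩
  naturality _ _ _ := rfl

/-- The union of two subcomplexes. -/
def Sub.union {X : SSet.{0}} (S T : Sub X) : Sub X where
  carrier m := S.carrier m ∪ T.carrier m
  map_mem _ _ f _ h := h.imp (fun hs => S.map_mem f hs) (fun ht => T.map_mem f ht)

/-- The intersection of two subcomplexes. -/
def Sub.inter {X : SSet.{0}} (S T : Sub X) : Sub X where
  carrier m := S.carrier m ∩ T.carrier m
  map_mem _ _ f _ h := ⟨S.map_mem f h.1, T.map_mem f h.2⟩

/-- A subcomplex `S` of `X`, viewed as a subcomplex of (the simplicial set underlying)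
another subcomplex `T` of `X`. -/
def Sub.restrict {X : SSet.{0}} (T S : Sub X) : Sub T.toSSet where
  carrier m := {σ | σ.1 ∈ S.carrier m}
  map_mem _ _ f _ h := S.map_mem f h

/-- The (dimension zero) object of `SimplexCategoryᵒᵖ` indexing vertices. -/
abbrev V0 : SimplexCategoryᵒᵖ := Opposite.op (SimplexCategory.mk 0)

/-- The full subcomplex of `X` on a set `ν` of vertices: the simplices all of whose
vertices lie in `ν`. -/
def fullSub (X : SSet.{0}) (ν : Set (X.obj V0)) : Sub X where
  carrier m := {σ | ∀ g : SimplexCategory.mk 0 ⟶ m.unop, X.map g.op σ ∈ ν}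
  map_mem := by
    intro m m' f σ hσ g
    rw [← FunctorToTypes.map_comp_apply]
    exact hσ (g ≫ f.unop)

/-! ## Widenings and widened inclusions -/

/-- The widening `W_ν(X)` of `X` at a set `ν` of vertices: the full subcomplex of
`J × X` on the vertex set `({0} × X₀) ∪ ({1} × ν)`. -/
def wideSub (X : SSet.{0}) (ν : Set (X.obj V0)) : Sub (sprod J X) :=
  fullSub (sprod J X) {p | p.1 0 = true → p.2 ∈ ν}

/-- The subcomplex `{0} × X` of `J × X` (the full subcomplex on the vertices
`{0} × X₀`). -/
def zeroSlice (X : SSet.{0}) : Sub (sprod J X) :=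
  fullSub (sprod J X) {p | p.1 0 = false}

/-- For `A` a subcomplex of `Y`, the subcomplex `J × A` of `J × Y`. -/
def Sub.prodJ {Y : SSet.{0}} (A : Sub Y) : Sub (sprod J Y) where
  carrier m := {p | p.2 ∈ A.carrier m}
  map_mem _ _ f _ h := A.map_mem f h

/-- Given a subcomplex (inclusion) `A = X ⊆ Y` and a set `ν` of vertices of `Y`, the
subcomplex `({0} × Y) ∪ W_{ν ∩ X₀}(X)` of `J × Y`: the domain of the inclusion
`X ↪ Y` widened at `ν`. -/
def widenedSub (Y : SSet.{0}) (A : Sub Y) (ν : Set (Y.obj V0)) : Sub (sprod J Y) :=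
  (zeroSlice Y).union ((wideSub Y (ν ∩ A.carrier V0)).inter A.prodJ)

lemma zeroSlice_le_wideSub (Y : SSet.{0}) (ν : Set (Y.obj V0)) :
    (zeroSlice Y).Le (wideSub Y ν) := by
  intro m σ hσ g h
  exact absurd (hσ g) (by simp [h])

lemma wideSub_mono (Y : SSet.{0}) {ν ν' : Set (Y.obj V0)} (h : ν ⊆ ν') :
    (wideSub Y ν).Le (wideSub Y ν') :=
  fun _ σ hσ g ht => h (hσ g ht)

lemma widenedSub_le (Y : SSet.{0}) (A : Sub Y) (ν : Set (Y.obj V0)) :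
    (widenedSub Y A ν).Le (wideSub Y ν) := by
  refine fun m σ hσ => Or.elim hσ (fun h => ?_) (fun h => ?_)
  · exact zeroSlice_le_wideSub Y ν m h
  · exact wideSub_mono Y Set.inter_subset_left m h.1

/-- The inclusion `X ↪ Y` widened at `ν`: the inclusion
`({0} × Y) ∪ W_{ν ∩ X₀}(X) ↪ W_ν(Y)`. -/
def widenedIncl (Y : SSet.{0}) (A : Sub Y) (ν : Set (Y.obj V0)) :
    (widenedSub Y A ν).toSSet ⟶ (wideSub Y ν).toSSet :=
  Sub.homOfLe (widenedSub_le Y A ν)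

/-- `Wide`: the class of all widened inclusions. -/
def Wide : MorphismProperty SSet.{0} := fun _ _ h =>
  ∃ (Y : SSet.{0}) (A : Sub Y) (ν : Set (Y.obj V0)),
    Arrow.mk h = Arrow.mk (widenedIncl Y A ν)

/-- `Wide^(1)`: the class of inclusions widened at a single vertex. -/
def Wide1 : MorphismProperty SSet.{0} := fun _ _ h =>
  ∃ (Y : SSet.{0}) (A : Sub Y) (v : Y.obj V0),
    Arrow.mk h = Arrow.mk (widenedIncl Y A {v})

/-! ## Narrow vertices -/

/-- A vertex `v` of `Y` is narrow if every simplex of `Y` has at most one vertex equal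
to `v`. -/
def Narrow (Y : SSet.{0}) (v : Y.obj V0) : Prop :=
  ∀ ⦃m : SimplexCategoryᵒᵖ⦄ (σ : Y.obj m) (g g' : SimplexCategory.mk 0 ⟶ m.unop),
    Y.map g.op σ = v → Y.map g'.op σ = v → g = g'

/-- `Wide_nar`: the class of inclusions widened at a narrow set of vertices. -/
def WideNar : MorphismProperty SSet.{0} := fun _ _ h =>
  ∃ (Y : SSet.{0}) (A : Sub Y) (ν : Set (Y.obj V0)),
    (∀ v ∈ ν, Narrow Y v) ∧ Arrow.mk h = Arrow.mk (widenedIncl Y A ν)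

/-- `Wide_nar^(1)`: the class of inclusions widened at a single narrow vertex. -/
def WideNar1 : MorphismProperty SSet.{0} := fun _ _ h =>
  ∃ (Y : SSet.{0}) (A : Sub Y) (v : Y.obj V0),
    Narrow Y v ∧ Arrow.mk h = Arrow.mk (widenedIncl Y A {v})

/-! ## Standard simplices, boundaries, skeleta, iso-horns -/

/-- The unique map to the terminal simplicial set `Δ[0]`. -/
def toPt (X : SSet.{0}) : X ⟶ Δ[0] where
  app m := TypeCat.ofHom fun _ => SSet.stdSimplex.const 0 0 m
  naturality m m' f := by
    ext x : 3
    apply SSet.stdSimplex.objEquiv.injective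
    apply SimplexCategory.Hom.ext
    apply OrderHom.ext
    funext j
    exact Subsingleton.elim (α := Fin 1) _ _

/-- The `i`-th vertex of the standard simplex `Δ[n]`. -/
def vrt (n : ℕ) (i : Fin (n + 1)) : Δ[n].obj V0 :=
  SSet.stdSimplex.const n i V0

/-- The boundary `∂Δ[n]`, as a subcomplex of `Δ[n]`: the simplices which are not
surjective as monotone maps. -/
def bSub (n : ℕ) : Sub Δ[n] where
  carrier m := {σ | ¬Function.Surjective (SSet.stdSimplex.asOrderHom σ)}
  map_mem _ _ f σ hσ h := hσ (Function.Surjective.of_comp h)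

/-- The `k`-skeleton of `Y`, as a subcomplex: the simplices which factor through some
simplex of dimension at most `k`. -/
def skSub (Y : SSet.{0}) (k : ℕ) : Sub Y where
  carrier m := {σ | ∃ (j : ℕ) (_ : j ≤ k) (f : m.unop ⟶ SimplexCategory.mk j)
    (τ : Y.obj (Opposite.op (SimplexCategory.mk j))), Y.map f.op τ = σ}
  map_mem := by
    rintro m m' φ σ ⟨j, hj, f, τ, rfl⟩
    exact ⟨j, hj, φ.unop ≫ f, τ, by rw [← FunctorToTypes.map_comp_apply]; rfl⟩

/-- A `k`-simplex is nondegenerate if it admits no factorization through a simplex of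
strictly smaller dimension. -/
def Nondegenerate (Y : SSet.{0}) {k : ℕ} (σ : Y.obj (Opposite.op (SimplexCategory.mk k))) :
    Prop :=
  ∀ (j : ℕ) (f : SimplexCategory.mk k ⟶ SimplexCategory.mk j)
    (τ : Y.obj (Opposite.op (SimplexCategory.mk j))), Y.map f.op τ = σ → k ≤ j

/-- The iso-horn inclusion `𝕍_i[m+1] ↪ ∇̄_i[m+1]`: the boundary inclusion
`∂Δ[m] ↪ Δ[m]` widened at the single vertex `i`, i.e. the inclusion
`({0} × Δ[m]) ∪ W_i(∂Δ[m]) ↪ W_i(Δ[m])` of the iso-horn into the isoplex. -/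
def isoHornIncl (m : ℕ) (i : Fin (m + 1)) :
    (widenedSub Δ[m] (bSub m) {vrt m i}).toSSet ⟶ (wideSub Δ[m] {vrt m i}).toSSet :=
  widenedIncl Δ[m] (bSub m) {vrt m i}

/-- `IsoHorn`: the class of all iso-horn inclusions. -/
def IsoHorn : MorphismProperty SSet.{0} := fun _ _ h =>
  ∃ (m : ℕ) (i : Fin (m + 1)), Arrow.mk h = Arrow.mk (isoHornIncl m i)

/-! ## The classes `({0} ↪ J) □ Bdry` and `({0} ↪ J) □ Mono` -/

/-- The class `({0} ↪ J) □ Bdry` of pushout-products of the vertex `0 : Δ[0] ⟶ J`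
with the boundary inclusions `∂Δ[n] ↪ Δ[n]`. -/
def ppJ0Bdry : MorphismProperty SSet.{0} := fun _ _ h =>
  ∃ n : ℕ, Arrow.mk h = Arrow.mk (pp (ptJ false) (SSet.boundary n).ι)

/-- The class `({0} ↪ J) □ Mono` of pushout-products of the vertex `0 : Δ[0] ⟶ J`
with all monomorphisms of simplicial sets. -/
def ppJ0Mono : MorphismProperty SSet.{0} := fun _ _ h =>
  ∃ (W Z : SSet.{0}) (g : W ⟶ Z), Mono g ∧ Arrow.mk h = Arrow.mk (pp (ptJ false) g)


/-- The set `N_k` of nondegenerate `k`-simplices of `Y` which have `y` as a vertex and do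
not belong to the subcomplex `A`. -/
def Nk (Y : SSet.{0}) (A : Sub Y) (y : Y.obj V0) (k : ℕ) : Type :=
  {σ : Y.obj (Opposite.op (SimplexCategory.mk k)) //
    Nondegenerate Y σ ∧ σ ∉ A.carrier (Opposite.op (SimplexCategory.mk k)) ∧
      ∃ g : SimplexCategory.mk 0 ⟶ SimplexCategory.mk k, Y.map g.op σ = y}

/-- The subcomplex `Y ∪ W_y(X) ∪ W_y(sk_j Y)` of `J × Y` (with `Y` identified with
`{0} × Y`). -/
def filtSub (Y : SSet.{0}) (A : Sub Y) (y : Y.obj V0) (j : ℕ) : Sub (sprod J Y) :=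
  ((zeroSlice Y).union ((wideSub Y {y}).inter A.prodJ)).union
    ((wideSub Y {y}).inter (skSub Y j).prodJ)

/-!
Everything is checked levelwise, where a square whose right map is injective is a pushout as soon
as it is a pullback, the right and bottom maps are jointly surjective, and the bottom map is
injective off the image of the left map. Each `σ ∈ N_k` gives the map `J × σ : J × Δ[k] → J × Y`;
it sends the isoplex `W_{i_σ}(Δ[k])` into the larger filtration stage and the iso-horn into the
smaller one, and a simplex `(a, f)` of the isoplex lies in the iso-horn exactly when it lands in the
smaller stage, because `σ` is nondegenerate of dimension `k` and not in `X`. By Eilenberg–Zilber a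
simplex `(a, τ)` of the larger stage outside the smaller one is `(a, σ ∘ f)` for a unique surjection
`f` and a unique nondegenerate `σ`, which lies in `N_k`; narrowness of `y` says that the only vertex
of `σ` equal to `y` is `i_σ`, so `(a, f)` lies in the isoplex.
-/

open SSet.stdSimplex (objEquiv)

def Sub.homOfMapsTo {X Z : SSet.{0}} (f : X ⟶ Z) {S : Sub X} {T : Sub Z}
    (h : ∀ m, Set.MapsTo (f.app m) (S.carrier m) (T.carrier m)) : S.toSSet ⟶ T.toSSet where
  app m := TypeCat.ofHom fun x => ⟨f.app m x.1, h m x.2⟩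
  naturality _ _ φ := by
    ext x : 3
    apply Subtype.ext
    exact ConcreteCategory.congr_hom (f.naturality φ) x.1

section Coproducts

variable {ι : Type} (X : ι → SSet.{0}) (m : SimplexCategoryᵒᵖ)

noncomputable def isColimitCofanMkSigmaιApp :
    IsColimit (Cofan.mk ((∐ X).obj m) fun i => (Sigma.ι X i).app m) :=
  (isColimitMapCoconeCofanMkEquiv ((evaluation _ _).obj m) X _).1
    (isColimitOfPreserves ((evaluation _ _).obj m) (coproductIsCoproduct X))

lemma exists_sigma_ι_app_eq (z : (∐ X).obj m) : ∃ i x, (Sigma.ι X i).app m x = z :=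
  Cofan.inj_jointly_surjective_of_isColimit (isColimitCofanMkSigmaιApp X m) z

lemma sigma_ι_app_eq_iff {i j : ι} (x : (X i).obj m) (x' : (X j).obj m) :
    (Sigma.ι X i).app m x = (Sigma.ι X j).app m x' ↔
      (⟨i, x⟩ : Σ i, (X i).obj m) = ⟨j, x'⟩ := by
  refine (Cofan.inj_apply_eq_iff_of_isColimit (isColimitCofanMkSigmaιApp X m) x x').trans ?_
  constructor
  · rintro ⟨rfl, rfl⟩
    rfl
  · intro h
    cases h
    exact ⟨rfl, rfl⟩

variable {X} {Z : SSet.{0}}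

lemma sigma_desc_app_ι_app (f : ∀ i, X i ⟶ Z) (i : ι) (x : (X i).obj m) :
    (Sigma.desc f).app m ((Sigma.ι X i).app m x) = (f i).app m x := by
  rw [← NatTrans.comp_app_apply, Sigma.ι_desc]

lemma sigma_map_app_ι_app {X' : ι → SSet.{0}} (f : ∀ i, X i ⟶ X' i) (i : ι) (x : (X i).obj m) :
    (Limits.Sigma.map f).app m ((Sigma.ι X i).app m x) = (Sigma.ι X' i).app m ((f i).app m x) := by
  rw [← NatTrans.comp_app_apply, Sigma.ι_map, NatTrans.comp_app_apply]

end Coproducts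

section Cells

variable {ι : Type} {X : ι → SSet.{0}} {Z : SSet.{0}} {A B : ∀ i, Sub (X i)} {S T : Sub Z}
  (hAB : ∀ i, (A i).Le (B i)) (hST : S.Le T) (φ : ∀ i, X i ⟶ Z)
  (hA : ∀ i m, Set.MapsTo ((φ i).app m) ((A i).carrier m) (S.carrier m))
  (hB : ∀ i m, Set.MapsTo ((φ i).app m) ((B i).carrier m) (T.carrier m))

lemma Sub.sigmaDesc_homOfMapsTo_comp_homOfLe :
    (Sigma.desc fun i => Sub.homOfMapsTo (φ i) (hA i)) ≫ Sub.homOfLe hST =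
      Limits.Sigma.map (fun i => Sub.homOfLe (hAB i)) ≫
        Sigma.desc fun i => Sub.homOfMapsTo (φ i) (hB i) := by
  ext1 i
  simp only [Sigma.ι_desc_assoc, Sigma.ι_map_assoc, Sigma.ι_desc]
  rfl

lemma Sub.isPullback_app_of_cells
    (hpre : ∀ i m x, x ∈ (B i).carrier m → (φ i).app m x ∈ S.carrier m → x ∈ (A i).carrier m)
    (m : SimplexCategoryᵒᵖ) :
    IsPullback ((Sigma.desc fun i => Sub.homOfMapsTo (φ i) (hA i)).app m)
      ((Limits.Sigma.map fun i => Sub.homOfLe (hAB i)).app m) ((Sub.homOfLe hST).app m)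
      ((Sigma.desc fun i => Sub.homOfMapsTo (φ i) (hB i)).app m) := by
  refine (Types.isPullback_iff _ _ _ _).2 ⟨congrArg (NatTrans.app · m)
    (Sub.sigmaDesc_homOfMapsTo_comp_homOfLe hAB hST φ hA hB), ?_, ?_⟩
  · rintro x₁ y₁ ⟨-, h⟩
    obtain ⟨i, ⟨a, ha⟩, rfl⟩ := exists_sigma_ι_app_eq _ m x₁
    obtain ⟨j, ⟨b, hb⟩, rfl⟩ := exists_sigma_ι_app_eq _ m y₁
    -- `erw`: simplices of `Sub.toSSet` are subtypes only after unfolding `Sub.toSSet`.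
    erw [sigma_map_app_ι_app, sigma_map_app_ι_app, sigma_ι_app_eq_iff] at h
    obtain ⟨rfl, h⟩ := Sigma.mk.inj_iff.1 h
    obtain rfl : a = b := congrArg Subtype.val (eq_of_heq h)
    rfl
  · intro x₂ x₃ h
    obtain ⟨i, ⟨x, hx⟩, rfl⟩ := exists_sigma_ι_app_eq _ m x₃
    erw [sigma_desc_app_ι_app] at h
    have h' : x₂.1 = (φ i).app m x := congrArg Subtype.val h
    have hxA : x ∈ (A i).carrier m := hpre i m x hx (h' ▸ x₂.2)
    refine ⟨(Sigma.ι (fun i => (A i).toSSet) i).app m ⟨x, hxA⟩, ?_, ?_⟩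
    · erw [sigma_desc_app_ι_app]
      exact Subtype.ext h'.symm
    · erw [sigma_map_app_ι_app]
      rfl

theorem Sub.isPushout_of_cells
    (hpre : ∀ i m x, x ∈ (B i).carrier m → (φ i).app m x ∈ S.carrier m → x ∈ (A i).carrier m)
    (hcover : ∀ m z, z ∈ T.carrier m → z ∉ S.carrier m →
      ∃ i x, x ∈ (B i).carrier m ∧ (φ i).app m x = z)
    (hinj : ∀ m i j x x', x ∈ (B i).carrier m → x ∉ (A i).carrier m →
      x' ∈ (B j).carrier m → x' ∉ (A j).carrier m → (φ i).app m x = (φ j).app m x' →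
        (⟨i, x⟩ : Σ i, (X i).obj m) = ⟨j, x'⟩) :
    IsPushout (Sigma.desc fun i => Sub.homOfMapsTo (φ i) (hA i))
      (Limits.Sigma.map fun i => Sub.homOfLe (hAB i)) (Sub.homOfLe hST)
      (Sigma.desc fun i => Sub.homOfMapsTo (φ i) (hB i)) := by
  refine IsPushout.of_forall_isPushout_app fun m => ?_
  have : Mono ((Sub.homOfLe hST).app m) :=
    (mono_iff_injective _).2 fun _ _ h => Subtype.ext (congrArg Subtype.val h :)
  refine Types.isPushout_of_isPullback_of_mono'
    (Sub.isPullback_app_of_cells hAB hST φ hA hB hpre m) ?_ ?_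
  · refine Set.eq_univ_of_forall fun ⟨z, hz⟩ => ?_
    by_cases hzS : z ∈ S.carrier m
    · exact Or.inl ⟨⟨z, hzS⟩, rfl⟩
    · obtain ⟨i, x, hx, rfl⟩ := hcover m z hz hzS
      refine Or.inr ⟨(Sigma.ι (fun i => (B i).toSSet) i).app m ⟨x, hx⟩, ?_⟩
      erw [sigma_desc_app_ι_app]
      rfl
  · have not_mem_A : ∀ i x (hx : x ∈ (B i).carrier m),
        (Sigma.ι (fun i => (B i).toSSet) i).app m ⟨x, hx⟩ ∉
          Set.range ((Limits.Sigma.map fun i => Sub.homOfLe (hAB i)).app m) →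
          x ∉ (A i).carrier m := fun i x _ hx hA =>
      hx ⟨(Sigma.ι (fun i => (A i).toSSet) i).app m ⟨x, hA⟩, by erw [sigma_map_app_ι_app]; rfl⟩
    intro x₃ y₃ hx₃ hy₃ h
    obtain ⟨i, ⟨x, hx⟩, rfl⟩ := exists_sigma_ι_app_eq _ m x₃
    obtain ⟨j, ⟨x', hx'⟩, rfl⟩ := exists_sigma_ι_app_eq _ m y₃
    erw [sigma_desc_app_ι_app, sigma_desc_app_ι_app] at h
    obtain ⟨rfl, h⟩ := Sigma.mk.inj_iff.1 (hinj m i j x x' hx (not_mem_A i x hx hx₃) hx'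
      (not_mem_A j x' hx' hy₃) (congrArg Subtype.val h))
    cases eq_of_heq h
    rfl

end Cells

section Simplices

variable {Y : SSet.{0}}

lemma nondegenerate_iff_mem_nonDegenerate {k : ℕ} (σ : Y _⦋k⦌) :
    Nondegenerate Y σ ↔ σ ∈ Y.nonDegenerate k := by
  rw [SSet.mem_nonDegenerate_iff_notMem_degenerate]
  constructor
  · rintro h ⟨j, hj, f, τ, hτ⟩
    exact absurd (h j f τ hτ) (not_le.2 hj)
  · intro h j f τ hτ
    by_contra hlt
    exact h ⟨j, not_le.1 hlt, f, τ, hτ⟩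

lemma exists_map_section_eq {m : SimplexCategoryᵒᵖ} {b : SimplexCategory} (f : m.unop ⟶ b) [Epi f]
    (σ : Y.obj (op b)) : ∃ s : b ⟶ m.unop, Y.map s.op (Y.map f.op σ) = σ := by
  obtain ⟨⟨s⟩⟩ := isSplitEpi_of_epi f
  refine ⟨s.section_, ?_⟩
  rw [← Functor.map_comp_apply, ← op_comp, s.id, op_id, Functor.map_id_apply]

lemma Sub.map_mem_iff_of_epi (A : Sub Y) {m : SimplexCategoryᵒᵖ} {b : SimplexCategory}
    (f : m.unop ⟶ b) [Epi f] (σ : Y.obj (op b)) :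
    Y.map f.op σ ∈ A.carrier m ↔ σ ∈ A.carrier (op b) := by
  refine ⟨fun h => ?_, fun h => A.map_mem f.op h⟩
  obtain ⟨s, hs⟩ := exists_map_section_eq f σ
  exact hs ▸ A.map_mem s.op h

lemma skSub_mono {i j : ℕ} (h : i ≤ j) : (skSub Y i).Le (skSub Y j) :=
  fun _ _ ⟨d, hd, f, τ, hτ⟩ => ⟨d, hd.trans h, f, τ, hτ⟩

lemma map_mem_skSub_iff {m : SimplexCategoryᵒᵖ} {d : ℕ} (f : m.unop ⟶ ⦋d⦌) [Epi f]
    {σ : Y _⦋d⦌} (hσ : σ ∈ Y.nonDegenerate d) (j : ℕ) :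
    Y.map f.op σ ∈ (skSub Y j).carrier m ↔ d ≤ j := by
  refine ⟨fun ⟨j', hj', g, ρ, hρ⟩ => ?_, fun h => ⟨d, h, f, σ, rfl⟩⟩
  obtain ⟨s, hs⟩ := exists_map_section_eq f σ
  have : Mono (s ≫ g) := Y.mono_of_nonDegenerate ⟨σ, hσ⟩ (s ≫ g) ρ (by
    rw [op_comp, Functor.map_comp_apply, hρ, hs])
  exact (SimplexCategory.len_le_of_mono (s ≫ g)).trans hj'

lemma map_mem_skSub_of_not_epi {m : SimplexCategoryᵒᵖ} {n : ℕ} (θ : m.unop ⟶ ⦋n + 1⦌)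
    (hθ : ¬Epi θ) (σ : Y _⦋n + 1⦌) : Y.map θ.op σ ∈ (skSub Y n).carrier m := by
  rw [SimplexCategory.epi_iff_surjective] at hθ
  obtain ⟨i, θ', rfl⟩ := SimplexCategory.eq_comp_δ_of_not_surjective θ hθ
  exact ⟨n, le_rfl, θ', Y.map (SimplexCategory.δ i).op σ, by
    rw [← Functor.map_comp_apply, ← op_comp]⟩

lemma exists_nonDegenerate_of_mem_skSub_succ {m : SimplexCategoryᵒᵖ} {n : ℕ} {τ : Y.obj m}
    (h : τ ∈ (skSub Y (n + 1)).carrier m) (h' : τ ∉ (skSub Y n).carrier m) :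
    ∃ (f : m.unop ⟶ ⦋n + 1⦌) (_ : Epi f) (σ : Y _⦋n + 1⦌),
      σ ∈ Y.nonDegenerate (n + 1) ∧ Y.map f.op σ = τ := by
  obtain ⟨d, f, hf, ⟨σ, hσ⟩, rfl⟩ := Y.exists_nonDegenerate (n := m.unop.len) τ
  obtain rfl : d = n + 1 := le_antisymm ((map_mem_skSub_iff f hσ _).1 h)
    (not_le.1 (mt (map_mem_skSub_iff f hσ _).2 h'))
  exact ⟨f, hf, σ, hσ, rfl⟩

lemma eq_of_map_eq_map_of_nonDegenerate {m : SimplexCategoryᵒᵖ} {d : ℕ}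
    {f f' : m.unop ⟶ ⦋d⦌} [Epi f] {σ σ' : Y _⦋d⦌} (hσ : σ ∈ Y.nonDegenerate d)
    (hσ' : σ' ∈ Y.nonDegenerate d) (h : Y.map f.op σ = Y.map f'.op σ') : f = f' ∧ σ = σ' :=
  ⟨Y.unique_nonDegenerate_map (n := m.unop.len) _ f ⟨σ, hσ⟩ rfl f' ⟨σ', hσ'⟩ h,
    congrArg Subtype.val
      (Y.unique_nonDegenerate_simplex (n := m.unop.len) _ f ⟨σ, hσ⟩ rfl f' ⟨σ', hσ'⟩ h)⟩

end Simplices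

section Widenings

variable {X Z : SSet.{0}}

lemma sprodMap_app_mem_wideSub_iff (g : X ⟶ Z) (ν : Set (Z.obj V0)) {m : SimplexCategoryᵒᵖ}
    (p : (sprod J X).obj m) :
    (sprodMap (𝟙 J) g).app m p ∈ (wideSub Z ν).carrier m ↔
      p ∈ (wideSub X (g.app V0 ⁻¹' ν)).carrier m :=
  forall_congr' fun v => imp_congr_right fun _ => by
    rw [Set.mem_preimage, ← NatTrans.naturality_apply]
    rfl

lemma preimage_yonedaEquiv_symm_app_eq_singleton {y : Z.obj V0} (hy : Narrow Z y) {k : ℕ}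
    {σ : Z _⦋k⦌} {i : Fin (k + 1)} (hi : Z.map (SimplexCategory.const ⦋0⦌ ⦋k⦌ i).op σ = y) :
    (SSet.yonedaEquiv.symm σ).app V0 ⁻¹' {y} = {vrt k i} := by
  ext v
  refine ⟨fun hv => objEquiv.injective (hy σ _ _ hv hi), ?_⟩
  rintro rfl
  exact hi

lemma vrt_mem_bSub (n : ℕ) (i : Fin (n + 2)) : vrt (n + 1) i ∈ (bSub (n + 1)).carrier V0 := by
  intro hs
  simpa using Fintype.card_le_of_surjective _ hs

lemma mem_bSub_iff {k : ℕ} {m : SimplexCategoryᵒᵖ} (x : Δ[k].obj m) :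
    x ∈ (bSub k).carrier m ↔ ¬Epi (objEquiv x) := by
  rw [SimplexCategory.epi_iff_surjective]
  rfl

lemma mem_isoHorn_iff {n : ℕ} {i : Fin (n + 2)} {m : SimplexCategoryᵒᵖ}
    {p : (sprod J Δ[n + 1]).obj m} (hp : p ∈ (wideSub Δ[n + 1] {vrt (n + 1) i}).carrier m) :
    p ∈ (widenedSub Δ[n + 1] (bSub (n + 1)) {vrt (n + 1) i}).carrier m ↔
      p ∈ (zeroSlice _).carrier m ∨ ¬Epi (objEquiv p.2) := by
  have hν : {vrt (n + 1) i} ∩ (bSub (n + 1)).carrier V0 = {vrt (n + 1) i} :=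
    Set.inter_eq_left.2 (Set.singleton_subset_iff.2 (vrt_mem_bSub n i))
  rw [← mem_bSub_iff]
  unfold widenedSub
  rw [hν]
  exact or_congr_right ⟨fun h => h.2, fun h => ⟨hp, h⟩⟩

end Widenings

section Filtration

variable {Y : SSet.{0}} {A : Sub Y} {y : Y.obj V0} {n : ℕ}

def sprodJSimplex {k : ℕ} (σ : Y _⦋k⦌) : sprod J Δ[k] ⟶ sprod J Y :=
  sprodMap (𝟙 J) (SSet.yonedaEquiv.symm σ)

lemma filtSub_mono {i j : ℕ} (h : i ≤ j) : (filtSub Y A y i).Le (filtSub Y A y j) :=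
  fun m _ hp => hp.imp_right fun hp => ⟨hp.1, skSub_mono h m hp.2⟩

lemma sprodJSimplex_mapsTo_wideSub {k : ℕ} {σ : Y _⦋k⦌} {i : Fin (k + 1)}
    (hi : Y.map (SimplexCategory.const ⦋0⦌ ⦋k⦌ i).op σ = y) (m : SimplexCategoryᵒᵖ) :
    Set.MapsTo ((sprodJSimplex σ).app m)
      ((wideSub Δ[k] {vrt k i}).carrier m) ((wideSub Y {y}).carrier m) := fun p hp =>
  (sprodMap_app_mem_wideSub_iff _ _ p).2 (wideSub_mono _ (Set.singleton_subset_iff.2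
    (show vrt k i ∈ (SSet.yonedaEquiv.symm σ).app V0 ⁻¹' {y} from hi)) m hp)

lemma sprodJSimplex_mapsTo_filtSub {σ : Y _⦋n + 1⦌} {i : Fin (n + 2)}
    (hi : Y.map (SimplexCategory.const ⦋0⦌ ⦋n + 1⦌ i).op σ = y) (m : SimplexCategoryᵒᵖ) :
    Set.MapsTo ((sprodJSimplex σ).app m)
      ((widenedSub Δ[n + 1] (bSub (n + 1)) {vrt (n + 1) i}).carrier m)
      ((filtSub Y A y n).carrier m) := by
  intro p hp
  rcases (mem_isoHorn_iff (widenedSub_le _ _ _ m hp)).1 hp with hp0 | hpb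
  · exact Or.inl (Or.inl hp0)
  · exact Or.inr ⟨sprodJSimplex_mapsTo_wideSub hi m (widenedSub_le _ _ _ m hp),
      map_mem_skSub_of_not_epi _ hpb σ⟩

lemma sprodJSimplex_mapsTo_filtSub_succ {σ : Y _⦋n + 1⦌} {i : Fin (n + 2)}
    (hi : Y.map (SimplexCategory.const ⦋0⦌ ⦋n + 1⦌ i).op σ = y) (m : SimplexCategoryᵒᵖ) :
    Set.MapsTo ((sprodJSimplex σ).app m)
      ((wideSub Δ[n + 1] {vrt (n + 1) i}).carrier m) ((filtSub Y A y (n + 1)).carrier m) :=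
  fun _ hp => Or.inr ⟨sprodJSimplex_mapsTo_wideSub hi m hp, n + 1, le_rfl, _, σ, rfl⟩

lemma mem_isoHorn_of_sprodJSimplex_mem_filtSub {σ : Y _⦋n + 1⦌}
    (hσ : σ ∈ Y.nonDegenerate (n + 1)) (hσA : σ ∉ A.carrier _) {i : Fin (n + 2)}
    {m : SimplexCategoryᵒᵖ} {p : (sprod J Δ[n + 1]).obj m}
    (hp : p ∈ (wideSub Δ[n + 1] {vrt (n + 1) i}).carrier m)
    (hpF : (sprodJSimplex σ).app m p ∈ (filtSub Y A y n).carrier m) :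
    p ∈ (widenedSub Δ[n + 1] (bSub (n + 1)) {vrt (n + 1) i}).carrier m := by
  rw [mem_isoHorn_iff hp]
  by_cases hepi : Epi (objEquiv p.2)
  · rcases hpF with (hp0 | ⟨-, hpA⟩) | ⟨-, hpsk⟩
    · exact Or.inl hp0
    · exact absurd ((A.map_mem_iff_of_epi (objEquiv p.2) σ).1 hpA) hσA
    · exact absurd ((map_mem_skSub_iff (objEquiv p.2) hσ n).1 hpsk) (Nat.not_succ_le_self n)
  · exact Or.inr hepi

lemma exists_sprodJSimplex_eq_of_mem_filtSub_succ (hy : Narrow Y y)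
    (iσ : Nk Y A y (n + 1) → Fin (n + 2))
    (hiσ : ∀ σ, Y.map (SimplexCategory.const ⦋0⦌ ⦋n + 1⦌ (iσ σ)).op σ.1 = y)
    {m : SimplexCategoryᵒᵖ} {z : (sprod J Y).obj m} (hz : z ∈ (filtSub Y A y (n + 1)).carrier m)
    (hz' : z ∉ (filtSub Y A y n).carrier m) :
    ∃ σ : Nk Y A y (n + 1), ∃ p ∈ (wideSub Δ[n + 1] {vrt (n + 1) (iσ σ)}).carrier m,
      (sprodJSimplex σ.1).app m p = z := by
  obtain ⟨a, τ⟩ := z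
  rcases hz with hz | ⟨hw, hsk⟩
  · exact absurd (Or.inl hz) hz'
  obtain ⟨f, hf, σ, hσ, rfl⟩ :=
    exists_nonDegenerate_of_mem_skSub_succ hsk fun h => hz' (Or.inr ⟨hw, h⟩)
  have hσA : σ ∉ A.carrier _ := fun h =>
    hz' (Or.inl (Or.inr ⟨hw, (A.map_mem_iff_of_epi f σ).2 h⟩))
  obtain ⟨v, hv⟩ : ∃ v : ⦋0⦌ ⟶ m.unop, a (v.toOrderHom 0) = true := by
    by_contra! h
    exact hz' (Or.inl (Or.inl fun v => Bool.eq_false_iff.2 (h v)))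
  have hvy : Y.map (v ≫ f).op σ = y := by
    rw [op_comp, Functor.map_comp_apply]
    exact hw v hv
  let σN : Nk Y A y (n + 1) :=
    ⟨σ, (nondegenerate_iff_mem_nonDegenerate σ).2 hσ, hσA, v ≫ f, hvy⟩
  refine ⟨σN, (a, objEquiv.symm f), ?_, rfl⟩
  have := (sprodMap_app_mem_wideSub_iff (SSet.yonedaEquiv.symm σ) {y} (a, objEquiv.symm f)).1 hw
  rwa [preimage_yonedaEquiv_symm_app_eq_singleton hy (hiσ σN)] at this

lemma sprodJSimplex_injective_off_isoHorn {iσ : Nk Y A y (n + 1) → Fin (n + 2)}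
    {σ σ' : Nk Y A y (n + 1)} {m : SimplexCategoryᵒᵖ} {p p' : (sprod J Δ[n + 1]).obj m}
    (hp : p ∈ (wideSub Δ[n + 1] {vrt (n + 1) (iσ σ)}).carrier m)
    (hpA : p ∉ (widenedSub Δ[n + 1] (bSub (n + 1)) {vrt (n + 1) (iσ σ)}).carrier m)
    (h : (sprodJSimplex σ.1).app m p = (sprodJSimplex σ'.1).app m p') :
    (⟨σ, p⟩ : Σ _ : Nk Y A y (n + 1), (sprod J Δ[n + 1]).obj m) = ⟨σ', p'⟩ := by
  obtain ⟨a, x⟩ := p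
  obtain ⟨a', x'⟩ := p'
  have : Epi (objEquiv x) := by
    by_contra hx
    exact hpA ((mem_isoHorn_iff hp).2 (Or.inr hx))
  obtain rfl : a = a' := congrArg Prod.fst h
  obtain ⟨hx, hσ⟩ := eq_of_map_eq_map_of_nonDegenerate (f := objEquiv x) (f' := objEquiv x')
    ((nondegenerate_iff_mem_nonDegenerate _).1 σ.2.1)
    ((nondegenerate_iff_mem_nonDegenerate _).1 σ'.2.1) (congrArg Prod.snd h)
  obtain rfl : σ = σ' := Subtype.ext hσ
  obtain rfl : x = x' := objEquiv.injective hx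
  rfl

theorem filtSub_isPushout_succ (hy : Narrow Y y) (iσ : Nk Y A y (n + 1) → Fin (n + 2))
    (hiσ : ∀ σ, Y.map (SimplexCategory.const ⦋0⦌ ⦋n + 1⦌ (iσ σ)).op σ.1 = y) :
    IsPushout
      (Sigma.desc fun σ => Sub.homOfMapsTo _ (sprodJSimplex_mapsTo_filtSub (hiσ σ)))
      (Limits.Sigma.map fun σ => isoHornIncl (n + 1) (iσ σ))
      (Sub.homOfLe (filtSub_mono (A := A) (y := y) n.le_succ))
      (Sigma.desc fun σ => Sub.homOfMapsTo _ (sprodJSimplex_mapsTo_filtSub_succ (hiσ σ))) :=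
  Sub.isPushout_of_cells (fun _ => widenedSub_le _ _ _) _ _ _ _
    (fun σ _ _ hp hpF => mem_isoHorn_of_sprodJSimplex_mem_filtSub
      ((nondegenerate_iff_mem_nonDegenerate _).1 σ.2.1) σ.2.2.1 hp hpF)
    (fun _ _ hz hz' => exists_sprodJSimplex_eq_of_mem_filtSub_succ hy iσ hiσ hz hz')
    (fun _ _ _ _ _ hp hpA _ _ h => sprodJSimplex_injective_off_isoHorn hp hpA h)

end Filtration

theorem filtSub_isPushout_of_isoHorns_general (Y : SSet.{0}) (A : Sub Y) (y : Y.obj V0)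
    (hy : Narrow Y y) (k : ℕ) (hk : 1 ≤ k)
    (iσ : Nk Y A y k → Fin (k + 1))
    (hiσ : ∀ σ : Nk Y A y k,
      Y.map (SimplexCategory.const (SimplexCategory.mk 0) (SimplexCategory.mk k)
        (iσ σ)).op σ.1 = y) :
    ∃ (hle : (filtSub Y A y (k - 1)).Le (filtSub Y A y k))
      (top : (∐ fun σ : Nk Y A y k => (widenedSub Δ[k] (bSub k) {vrt k (iσ σ)}).toSSet) ⟶
        (filtSub Y A y (k - 1)).toSSet)
      (bot : (∐ fun σ : Nk Y A y k => (wideSub Δ[k] {vrt k (iσ σ)}).toSSet) ⟶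
        (filtSub Y A y k).toSSet),
      IsPushout top (Limits.Sigma.map fun σ : Nk Y A y k => isoHornIncl k (iσ σ))
        (Sub.homOfLe hle) bot := by
  obtain ⟨n, rfl⟩ : ∃ n, k = n + 1 := ⟨k - 1, (Nat.sub_add_cancel hk).symm⟩
  exact ⟨_, _, _, filtSub_isPushout_succ hy iσ hiσ⟩

/-- Let `X ⊆ Y` be an inclusion of simplicial sets, `y` a vertex of `X`
which is narrow in `Y`, and `k ≥ 1`. For each `σ` in `N_k` let `i_σ` be the (unique)
index such that the `i_σ`-th vertex of `σ` is `y`. Then the inclusion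
`Y ∪ W_y(X) ∪ W_y(sk_{k−1} Y) ↪ Y ∪ W_y(X) ∪ W_y(sk_k Y)` is a pushout of the coproduct
over `σ ∈ N_k` of the iso-horn inclusions `𝕍_{i_σ}[k+1] ↪ ∇̄_{i_σ}[k+1]`. -/
theorem filtSub_isPushout_of_isoHorns (Y : SSet.{0}) (A : Sub Y) (y : Y.obj V0)
    (hyA : y ∈ A.carrier V0) (hy : Narrow Y y) (k : ℕ) (hk : 1 ≤ k)
    (iσ : Nk Y A y k → Fin (k + 1))
    (hiσ : ∀ σ : Nk Y A y k,
      Y.map (SimplexCategory.const (SimplexCategory.mk 0) (SimplexCategory.mk k)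
        (iσ σ)).op σ.1 = y) :
    ∃ (hle : (filtSub Y A y (k - 1)).Le (filtSub Y A y k))
      (top : (∐ fun σ : Nk Y A y k => (widenedSub Δ[k] (bSub k) {vrt k (iσ σ)}).toSSet) ⟶
        (filtSub Y A y (k - 1)).toSSet)
      (bot : (∐ fun σ : Nk Y A y k => (wideSub Δ[k] {vrt k (iσ σ)}).toSSet) ⟶
        (filtSub Y A y k).toSSet),
      IsPushout top (Limits.Sigma.map fun σ : Nk Y A y k => isoHornIncl k (iσ σ))
        (Sub.homOfLe hle) bot :=
  filtSub_isPushout_of_isoHorns_general Y A y hy k hk iσ hiσ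

end Paper
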